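/- Let n ≥ 2 and let g be any simple graph on n vertices. Then the truncated shell distribution n*_S(g) = (n_0(g), …, n_{n-2}(g)) ∈ ℝ^{n-1} does not lie in the interior of the model polytope 𝒫_n = conv{n*_S(h) : h a simple graph on n vertices} = {x ∈ ℝ^{n-1} : x_j ≥ 0 for all j, Σ_{j=0}^{n-2} x_j ≤ n}. Consequently, for a sample of size one from the shell distribution exponential random graph model, the maximum likelihood estimator never exists. -/

import Mathlib

/-- `MinDegGE G k S`: the subgraph of `G` induced on the vertex set `S` has minimum
degree at least `k`, i.e. every vertex of `S` has at least `k` neighbors inside `S`. -/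
def MinDegGE {V : Type*} (G : SimpleGraph V) (k : ℕ) (S : Set V) : Prop :=
  ∀ v ∈ S, k ≤ Nat.card {w : V // G.Adj v w ∧ w ∈ S}

/-- The vertex set of the `k`-core of `G`: the union of all vertex subsets inducing a
subgraph of minimum degree at least `k`. -/
def coreVerts {V : Type*} (G : SimpleGraph V) (k : ℕ) : Set V :=
  {v | ∃ S : Set V, MinDegGE G k S ∧ v ∈ S}

/-- The shell index of `v`: the largest `k` such that `v` belongs to the `k`-core. -/
noncomputable def shellIndex {V : Type*} (G : SimpleGraph V) (v : V) : ℕ :=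
  sSup {k : ℕ | v ∈ coreVerts G k}

/-- `n_j(g)`: the number of vertices of `G` with shell index `j`. -/
noncomputable def shellCount {V : Type*} (G : SimpleGraph V) (j : ℕ) : ℕ :=
  Nat.card {v : V // shellIndex G v = j}

/-!
The polytope is the simplex with vertices `0` and `n • eⱼ`: every shell index is at most `n - 1`,
and in the `j`-th power of the path on `n` vertices every vertex has shell index `j`, which gives
the vertex `n • eⱼ` for `j < n - 1` and the vertex `0` for `j = n - 1`.

A truncated shell distribution lies on a facet of this simplex. If some vertex has shell index
`n - 1`, it has all `n - 1` other vertices as neighbours inside its `(n - 1)`-core, so that core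
is the whole vertex set and the distribution is `0`. Otherwise the counts `n₀, …, n_{n-2}` add up
to `n`. In both cases the point extremises a nonzero linear functional (a coordinate, or the sum
of the coordinates) over the polytope, which is impossible at an interior point.
-/

section ShellIndex

variable {V : Type*} (G : SimpleGraph V)

lemma mem_coreVerts_zero (v : V) : v ∈ coreVerts G 0 :=
  ⟨Set.univ, fun _ _ => Nat.zero_le _, Set.mem_univ v⟩

lemma shellIndex_le_of_forall_exists_card_le {j : ℕ}
    (h : ∀ S : Set V, S.Nonempty → ∃ u ∈ S, Nat.card {w : V // G.Adj u w ∧ w ∈ S} ≤ j)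
    (v : V) : shellIndex G v ≤ j :=
  csSup_le ⟨0, mem_coreVerts_zero G v⟩ fun _ ⟨S, hS, hv⟩ =>
    let ⟨u, hu, hle⟩ := h S ⟨v, hv⟩
    (hS u hu).trans hle

variable [Fintype V]

lemma natCard_adj_mem_le_card_sub_one (v : V) (S : Set V) :
    Nat.card {w : V // G.Adj v w ∧ w ∈ S} ≤ Fintype.card V - 1 := by
  classical
  calc Nat.card {w : V // G.Adj v w ∧ w ∈ S} ≤ Nat.card {w : V // w ≠ v} :=
        Nat.card_le_card_of_injective (fun w => ⟨w.1, w.2.1.ne'⟩)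
          fun _ _ h => Subtype.ext (Subtype.mk.inj h)
    _ = Fintype.card V - 1 := by simp [Nat.card_eq_fintype_card, Fintype.card_subtype_compl]

lemma le_card_sub_one_of_mem_coreVerts {k : ℕ} {v : V} (h : v ∈ coreVerts G k) :
    k ≤ Fintype.card V - 1 :=
  let ⟨S, hS, hv⟩ := h
  (hS v hv).trans (natCard_adj_mem_le_card_sub_one G v S)

lemma bddAbove_coreVerts (v : V) : BddAbove {k | v ∈ coreVerts G k} :=
  ⟨Fintype.card V - 1, fun _ => le_card_sub_one_of_mem_coreVerts G⟩

lemma le_shellIndex_of_mem_coreVerts {k : ℕ} {v : V} (h : v ∈ coreVerts G k) :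
    k ≤ shellIndex G v :=
  le_csSup (bddAbove_coreVerts G v) h

lemma mem_coreVerts_shellIndex (v : V) : v ∈ coreVerts G (shellIndex G v) :=
  Nat.sSup_mem ⟨0, mem_coreVerts_zero G v⟩ (bddAbove_coreVerts G v)

lemma shellIndex_le_card_sub_one (v : V) : shellIndex G v ≤ Fintype.card V - 1 :=
  le_card_sub_one_of_mem_coreVerts G (mem_coreVerts_shellIndex G v)

lemma shellIndex_eq_of_le_degree [DecidableRel G.Adj] {j : ℕ} (hdeg : ∀ v, j ≤ G.degree v)
    (hdegen : ∀ S : Set V, S.Nonempty → ∃ u ∈ S, Nat.card {w : V // G.Adj u w ∧ w ∈ S} ≤ j)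
    (v : V) : shellIndex G v = j := by
  refine le_antisymm (shellIndex_le_of_forall_exists_card_le G hdegen v)
    (le_shellIndex_of_mem_coreVerts G ⟨Set.univ, fun u _ => ?_, Set.mem_univ v⟩)
  have hu := hdeg u
  rw [← G.card_neighborSet_eq_degree, ← Nat.card_eq_fintype_card] at hu
  exact hu.trans_eq <| Nat.card_congr <| Equiv.subtypeEquivRight fun w => by simp

/-- A vertex of the `(|V| - 1)`-core has every other vertex as a neighbour inside the witnessing
set, so that set is everything. -/
lemma mem_coreVerts_card_sub_one {v : V} (hv : v ∈ coreVerts G (Fintype.card V - 1)) (u : V) :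
    u ∈ coreVerts G (Fintype.card V - 1) := by
  classical
  obtain ⟨S, hS, hvS⟩ := hv
  have hsub : ({w | G.Adj v w ∧ w ∈ S} : Finset V) ⊆ Finset.univ.erase v :=
    fun w hw => Finset.mem_erase.2 ⟨(Finset.mem_filter.1 hw).2.1.ne', Finset.mem_univ w⟩
  have hcard : (Finset.univ.erase v).card ≤ ({w | G.Adj v w ∧ w ∈ S} : Finset V).card := by
    simpa [Finset.card_erase_of_mem, Nat.card_eq_fintype_card, Fintype.card_subtype]
      using hS v hvS
  have hall := Finset.eq_of_subset_of_card_le hsub hcard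
  refine ⟨S, hS, ?_⟩
  by_cases huv : u = v
  · exact huv ▸ hvS
  · exact (Finset.mem_filter.1 (hall ▸ Finset.mem_erase.2 ⟨huv, Finset.mem_univ u⟩)).2.2

lemma shellIndex_eq_card_sub_one {v : V} (hv : shellIndex G v = Fintype.card V - 1) (u : V) :
    shellIndex G u = Fintype.card V - 1 :=
  le_antisymm (shellIndex_le_card_sub_one G u) <| le_shellIndex_of_mem_coreVerts G <|
    mem_coreVerts_card_sub_one G (hv ▸ mem_coreVerts_shellIndex G v) u

lemma shellCount_of_forall_shellIndex_eq {c : ℕ} (h : ∀ v, shellIndex G v = c) (j : ℕ) :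
    shellCount G j = if j = c then Fintype.card V else 0 := by
  simp only [shellCount, h]
  split_ifs with hj <;> simp [hj, Ne.symm]

lemma sum_shellCount :
    ∑ j ∈ Finset.range (Fintype.card V), shellCount G j = Fintype.card V := by
  classical
  have hmaps : ∀ v ∈ (Finset.univ : Finset V), shellIndex G v ∈ Finset.range (Fintype.card V) :=
    fun v _ => Finset.mem_range.2 <| (shellIndex_le_card_sub_one G v).trans_lt <|
      Nat.sub_one_lt_of_lt (Fintype.card_pos_iff.2 ⟨v⟩)
  simp only [shellCount, Nat.card_eq_fintype_card, Fintype.card_subtype]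
  exact (Finset.card_eq_sum_card_fiberwise hmaps).symm

end ShellIndex

/-- The `j`-th power of the path `0 - 1 - ⋯ - (n-1)`. -/
def pathGraphPow (n j : ℕ) : SimpleGraph (Fin n) where
  Adj a b := a ≠ b ∧ a.val ≤ b.val + j ∧ b.val ≤ a.val + j
  symm := ⟨fun _ _ h => ⟨h.1.symm, h.2.2, h.2.1⟩⟩
  loopless := ⟨fun _ h => h.1 rfl⟩

@[simp]
lemma pathGraphPow_adj {n j : ℕ} {a b : Fin n} :
    (pathGraphPow n j).Adj a b ↔ a ≠ b ∧ a.val ≤ b.val + j ∧ b.val ≤ a.val + j :=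
  Iff.rfl

instance (n j : ℕ) : DecidableRel (pathGraphPow n j).Adj :=
  fun a b => inferInstanceAs (Decidable (a ≠ b ∧ a.val ≤ b.val + j ∧ b.val ≤ a.val + j))

/-- The closed neighbourhood of `u` contains a window of `j + 1` consecutive vertices. -/
lemma le_degree_pathGraphPow {n j : ℕ} (hj : j < n) (u : Fin n) :
    j ≤ (pathGraphPow n j).degree u := by
  set a := min u.val (n - 1 - j)
  have hwindow : (Finset.Icc (⟨a, by omega⟩ : Fin n) ⟨a + j, by omega⟩).erase u ⊆
      (pathGraphPow n j).neighborFinset u := by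
    intro w hw
    simp only [Finset.mem_erase, Finset.mem_Icc, Fin.le_def] at hw
    simp only [SimpleGraph.mem_neighborFinset, pathGraphPow_adj]
    refine ⟨Ne.symm hw.1, ?_, ?_⟩ <;> omega
  calc j = (Finset.Icc (⟨a, by omega⟩ : Fin n) ⟨a + j, by omega⟩).card - 1 := by
        simp only [Fin.card_Icc]; omega
    _ = ((Finset.Icc (⟨a, by omega⟩ : Fin n) ⟨a + j, by omega⟩).erase u).card := by
        rw [Finset.card_erase_of_mem (by simp only [Finset.mem_Icc, Fin.le_def]; omega)]
    _ ≤ _ := Finset.card_le_card hwindow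

/-- The largest vertex of `S` has all its neighbours in `S` among the `j` vertices below it. -/
lemma exists_card_adj_mem_le_pathGraphPow {n j : ℕ} (S : Set (Fin n)) (hS : S.Nonempty) :
    ∃ u ∈ S, Nat.card {w // (pathGraphPow n j).Adj u w ∧ w ∈ S} ≤ j := by
  obtain ⟨m, hmS, hmax⟩ := Set.exists_max_image S id S.toFinite hS
  refine ⟨m, hmS, ?_⟩
  have hbelow : ∀ w : {w // (pathGraphPow n j).Adj m w ∧ w ∈ S},
      w.1.val ∈ Finset.Ico (m.val - j) m.val := by
    rintro ⟨w, hadj, hwS⟩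
    obtain ⟨hne, hmw, -⟩ := pathGraphPow_adj.1 hadj
    have hwm : w.val ≤ m.val := hmax w hwS
    have : w.val ≠ m.val := fun h => hne (Fin.ext h).symm
    simp only [Finset.mem_Ico]
    omega
  calc Nat.card {w // (pathGraphPow n j).Adj m w ∧ w ∈ S}
      ≤ Nat.card (Finset.Ico (m.val - j) m.val) :=
        Nat.card_le_card_of_injective (fun w => ⟨w.1.val, hbelow w⟩)
          fun _ _ h => Subtype.ext (Fin.ext (Subtype.mk.inj h))
    _ ≤ j := by simp only [Nat.card_eq_fintype_card, Fintype.card_coe, Nat.card_Ico]; omega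

lemma shellIndex_pathGraphPow {n j : ℕ} (hj : j < n) (v : Fin n) :
    shellIndex (pathGraphPow n j) v = j :=
  shellIndex_eq_of_le_degree _ (le_degree_pathGraphPow hj) exists_card_adj_mem_le_pathGraphPow v

/-- By Fermat's theorem `f` would have derivative `0` at an interior extremum. -/
lemma notMem_interior_of_isExtrOn {E : Type*} [NormedAddCommGroup E] [NormedSpace ℝ E]
    {s : Set E} {x : E} {f : E →L[ℝ] ℝ} (hf : f ≠ 0) (hext : IsExtrOn f s x) :
    x ∉ interior s := fun hx =>
  hf <| (hext.isLocalExtr (mem_interior_iff_mem_nhds.1 hx)).hasFDerivAt_eq_zero f.hasFDerivAt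

/-- The simplex with vertices `0` and `c • eⱼ`. -/
def cornerSimplex (ι : Type*) [Fintype ι] (c : ℝ) : Set (ι → ℝ) :=
  {x | (∀ j, 0 ≤ x j) ∧ ∑ j, x j ≤ c}

section CornerSimplex

variable {ι : Type*} [Fintype ι]

lemma convex_cornerSimplex (c : ℝ) : Convex ℝ (cornerSimplex ι c) := by
  rintro x ⟨hx, hxc⟩ y ⟨hy, hyc⟩ a b ha hb hab
  refine ⟨fun j => add_nonneg (mul_nonneg ha (hx j)) (mul_nonneg hb (hy j)), ?_⟩
  calc ∑ j, (a • x + b • y) j = a * ∑ j, x j + b * ∑ j, y j := by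
        simp [Finset.sum_add_distrib, Finset.mul_sum]
    _ ≤ a * c + b * c := by gcongr
    _ = c := by rw [← add_mul, hab, one_mul]

lemma cornerSimplex_subset_convexHull [DecidableEq ι] {c : ℝ} (hc : 0 < c) {s : Set (ι → ℝ)}
    (h0 : 0 ∈ s) (hs : ∀ j, Pi.single j c ∈ s) : cornerSimplex ι c ⊆ convexHull ℝ s := by
  rintro x ⟨hx, hxc⟩
  let w : Option ι → ℝ := fun o => o.elim (1 - (∑ j, x j) / c) fun j => x j / c
  let z : Option ι → ι → ℝ := fun o => o.elim 0 fun j => Pi.single j c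
  have hw : ∀ o, 0 ≤ w o
    | none => sub_nonneg.2 <| (div_le_one hc).2 hxc
    | some j => div_nonneg (hx j) hc.le
  have hwsum : ∑ o, w o = 1 := by
    simp only [w, Fintype.sum_option, Option.elim, ← Finset.sum_div]
    ring
  have hz : ∀ o, z o ∈ convexHull ℝ s
    | none => subset_convexHull ℝ s h0
    | some j => subset_convexHull ℝ s (hs j)
  have hx_eq : ∑ o, w o • z o = x := by
    ext i
    simp [w, z, Fintype.sum_option, Pi.single_apply, hc.ne']
  exact hx_eq ▸ (convex_convexHull ℝ s).sum_mem (fun o _ => hw o) hwsum fun o _ => hz o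

lemma convexHull_eq_cornerSimplex [DecidableEq ι] {c : ℝ} (hc : 0 < c) {s : Set (ι → ℝ)}
    (hsub : s ⊆ cornerSimplex ι c) (h0 : 0 ∈ s) (hs : ∀ j, Pi.single j c ∈ s) :
    convexHull ℝ s = cornerSimplex ι c :=
  (convexHull_min hsub (convex_cornerSimplex c)).antisymm (cornerSimplex_subset_convexHull hc h0 hs)

lemma notMem_interior_cornerSimplex_of_apply_eq_zero {c : ℝ} {x : ι → ℝ} {j : ι}
    (hxj : x j = 0) : x ∉ interior (cornerSimplex ι c) := by
  classical
  refine notMem_interior_of_isExtrOn (f := ContinuousLinearMap.proj j) ?_ (Or.inl ?_)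
  · exact fun h => one_ne_zero (α := ℝ) (by simpa using congrArg (· (Pi.single j 1)) h)
  · exact fun y hy => by simpa [hxj] using hy.1 j

lemma notMem_interior_cornerSimplex_of_sum_eq [Nonempty ι] {c : ℝ} {x : ι → ℝ}
    (hx : ∑ j, x j = c) : x ∉ interior (cornerSimplex ι c) := by
  classical
  refine notMem_interior_of_isExtrOn (f := ∑ j, ContinuousLinearMap.proj j) ?_ (Or.inr ?_)
  · obtain ⟨j⟩ := ‹Nonempty ι›
    exact fun h => one_ne_zero (α := ℝ) (by simpa using congrArg (· (Pi.single j 1)) h)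
  · exact fun y hy => by simpa [hx] using hy.2

end CornerSimplex

noncomputable def truncShellDist {n : ℕ} (G : SimpleGraph (Fin n)) : Fin (n - 1) → ℝ :=
  fun j => shellCount G j

section TruncShellDist

variable {n : ℕ}

lemma sum_truncShellDist_add_shellCount (G : SimpleGraph (Fin n)) :
    ∑ j, truncShellDist G j + shellCount G (n - 1) = n := by
  cases n with
  | zero => simp [shellCount]
  | succ m =>
    have hsum := sum_shellCount G
    rw [Fintype.card_fin, Finset.sum_range_succ] at hsum
    simp only [truncShellDist, Nat.add_sub_cancel]
    rw [Fin.sum_univ_eq_sum_range (fun j => (shellCount G j : ℝ))]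
    exact_mod_cast hsum

lemma truncShellDist_mem_cornerSimplex (G : SimpleGraph (Fin n)) :
    truncShellDist G ∈ cornerSimplex (Fin (n - 1)) n :=
  ⟨fun _ => Nat.cast_nonneg _, by
    linarith [sum_truncShellDist_add_shellCount G, (shellCount G (n - 1)).cast_nonneg (α := ℝ)]⟩

lemma truncShellDist_of_forall_shellIndex_eq {G : SimpleGraph (Fin n)} {c : ℕ}
    (h : ∀ v, shellIndex G v = c) :
    truncShellDist G = fun j : Fin (n - 1) => if (j : ℕ) = c then (n : ℝ) else 0 := by
  ext j
  simp [truncShellDist, shellCount_of_forall_shellIndex_eq G h]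

lemma truncShellDist_pathGraphPow (j : Fin (n - 1)) :
    truncShellDist (pathGraphPow n j) = Pi.single j (n : ℝ) := by
  ext i
  rw [truncShellDist_of_forall_shellIndex_eq (shellIndex_pathGraphPow (by omega)), Pi.single_apply]
  simp only [Fin.val_inj]

lemma truncShellDist_eq_zero_of_forall_shellIndex_eq {G : SimpleGraph (Fin n)}
    (h : ∀ v, shellIndex G v = n - 1) : truncShellDist G = 0 := by
  ext j
  simp [truncShellDist_of_forall_shellIndex_eq h, j.isLt.ne]

lemma truncShellDist_eq_zero_of_shellCount_ne_zero {G : SimpleGraph (Fin n)}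
    (h : shellCount G (n - 1) ≠ 0) : truncShellDist G = 0 := by
  obtain ⟨⟨v, hv⟩⟩ := Nat.card_ne_zero.1 h |>.1
  exact truncShellDist_eq_zero_of_forall_shellIndex_eq
    (by simpa using shellIndex_eq_card_sub_one G (by simpa using hv))

lemma convexHull_truncShellDist (hn : 1 ≤ n) :
    convexHull ℝ {x | ∃ H : SimpleGraph (Fin n), x = truncShellDist H} =
      cornerSimplex (Fin (n - 1)) n :=
  convexHull_eq_cornerSimplex (by exact_mod_cast hn)
    (by rintro _ ⟨H, rfl⟩; exact truncShellDist_mem_cornerSimplex H)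
    ⟨pathGraphPow n (n - 1),
      (truncShellDist_eq_zero_of_forall_shellIndex_eq (shellIndex_pathGraphPow (by omega))).symm⟩
    fun j => ⟨pathGraphPow n j, (truncShellDist_pathGraphPow j).symm⟩

/-- A truncated shell distribution is `0` if some vertex, hence every vertex, has the top shell
index `n - 1`, and otherwise its coordinates sum to `n`: either way it lies on a facet. -/
lemma truncShellDist_notMem_interior (hn : 2 ≤ n) (G : SimpleGraph (Fin n)) :
    truncShellDist G ∉ interior (cornerSimplex (Fin (n - 1)) n) := by
  have : Nonempty (Fin (n - 1)) := ⟨⟨0, by omega⟩⟩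
  by_cases htop : shellCount G (n - 1) = 0
  · exact notMem_interior_cornerSimplex_of_sum_eq
      (by simpa [htop] using sum_truncShellDist_add_shellCount G)
  · exact notMem_interior_cornerSimplex_of_apply_eq_zero (j := ⟨0, by omega⟩)
      (by rw [truncShellDist_eq_zero_of_shellCount_ne_zero htop]; rfl)

end TruncShellDist

/-- For `n ≥ 2` and any simple graph `g` on `n` vertices, the model
polytope `𝒫_n` (the convex hull of the truncated shell distributions of all simple
graphs on `n` vertices) equals `{x ∈ ℝ^{n-1} : xⱼ ≥ 0, Σ xⱼ ≤ n}`, and the truncated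
shell distribution `(n_0(g), …, n_{n-2}(g))` of `g` never lies in the interior of
`𝒫_n`; hence for a sample of size one the MLE never exists. -/
theorem truncated_shell_distribution_not_mem_interior {n : ℕ} (hn : 2 ≤ n)
    (G : SimpleGraph (Fin n)) :
    convexHull ℝ {x : Fin (n - 1) → ℝ |
        ∃ H : SimpleGraph (Fin n), x = fun j : Fin (n - 1) => (shellCount H (j : ℕ) : ℝ)} =
      {x : Fin (n - 1) → ℝ | (∀ j, 0 ≤ x j) ∧ ∑ j, x j ≤ (n : ℝ)} ∧
    (fun j : Fin (n - 1) => (shellCount G (j : ℕ) : ℝ)) ∉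
      interior (convexHull ℝ {x : Fin (n - 1) → ℝ |
        ∃ H : SimpleGraph (Fin n), x = fun j : Fin (n - 1) => (shellCount H (j : ℕ) : ℝ)}) := by
  have hpoly := convexHull_truncShellDist (n := n) (by omega)
  exact ⟨hpoly, hpoly ▸ truncShellDist_notMem_interior hn G⟩
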